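/- Under the hypotheses: ‖H − G‖ ≤ 1 − 3α₁/4 where H = (f''(x_{k+1})+K·I)⁻¹(f''(x_k)+K·I) and G = (f''(x_{k+1})+K·I)⁻¹(f''(x̃_k)+λ²(x_{k+1})g''(x̃_k)), and ‖(f''(x_{k+1})+K·I)⁻¹‖·K₃ ≤ α₁/2 with |λ²(x_{k+1})−λ²(x_k)|·|g'(x_k)| ≤ K₃|x_{k+1}−x_k|; then |x_{k+2} − x_{k+1}| ≤ (1 − α₁/4)|x_{k+1} − x_k|, where x_{k+2}−x_{k+1} = (H−G)(x_{k+1}−x_k) − (f''(x_{k+1})+K·I)⁻¹(λ²(x_{k+1})−λ²(x_k))g'(x_k). -/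
import Mathlib


/-- the contraction estimate
`|x_{k+2} - x_{k+1}| ≤ (1 - α₁/4) |x_{k+1} - x_k|`. -/
theorem stmt12 {n : ℕ}
    (H G Binv : EuclideanSpace ℝ (Fin n) →L[ℝ] EuclideanSpace ℝ (Fin n))
    (lam2 : EuclideanSpace ℝ (Fin n) → ℝ)
    (gp : EuclideanSpace ℝ (Fin n) → EuclideanSpace ℝ (Fin n))
    (xk xk1 xk2 : EuclideanSpace ℝ (Fin n))
    (α₁ K₃ : ℝ) (hα : 0 < α₁ ∧ α₁ < 1) (hK₃ : 0 < K₃)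
    (hHG : ‖H - G‖ ≤ 1 - 3 * α₁ / 4)
    (hBinv : ‖Binv‖ * K₃ ≤ α₁ / 2)
    (hlip : |lam2 xk1 - lam2 xk| * ‖gp xk‖ ≤ K₃ * ‖xk1 - xk‖)
    (heq : xk2 - xk1
      = (H - G) (xk1 - xk) - Binv ((lam2 xk1 - lam2 xk) • gp xk)) :
    ‖xk2 - xk1‖ ≤ (1 - α₁ / 4) * ‖xk1 - xk‖ := by
  have hd : (0:ℝ) ≤ ‖xk1 - xk‖ := norm_nonneg _
  have h1 : ‖(H - G) (xk1 - xk)‖ ≤ (1 - 3 * α₁ / 4) * ‖xk1 - xk‖ :=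
    le_trans ((H - G).le_opNorm _) (mul_le_mul_of_nonneg_right hHG hd)
  have h2 : ‖Binv ((lam2 xk1 - lam2 xk) • gp xk)‖ ≤ (α₁ / 2) * ‖xk1 - xk‖ := by
    calc ‖Binv ((lam2 xk1 - lam2 xk) • gp xk)‖
        ≤ ‖Binv‖ * ‖(lam2 xk1 - lam2 xk) • gp xk‖ := Binv.le_opNorm _
      _ = ‖Binv‖ * (|lam2 xk1 - lam2 xk| * ‖gp xk‖) := by
          rw [norm_smul, Real.norm_eq_abs]
      _ ≤ ‖Binv‖ * (K₃ * ‖xk1 - xk‖) :=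
          mul_le_mul_of_nonneg_left hlip (norm_nonneg _)
      _ = (‖Binv‖ * K₃) * ‖xk1 - xk‖ := by ring
      _ ≤ (α₁ / 2) * ‖xk1 - xk‖ := mul_le_mul_of_nonneg_right hBinv hd
  calc ‖xk2 - xk1‖
      ≤ ‖(H - G) (xk1 - xk)‖ + ‖Binv ((lam2 xk1 - lam2 xk) • gp xk)‖ := by
        rw [heq]; exact norm_sub_le _ _
    _ ≤ (1 - 3 * α₁ / 4) * ‖xk1 - xk‖ + (α₁ / 2) * ‖xk1 - xk‖ := add_le_add h1 h2
    _ = (1 - α₁ / 4) * ‖xk1 - xk‖ := by ring
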